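/- arXiv:1504.07495 — 3 statements merged into one kernel-verified Lean document; each statement's English description precedes it below -/
import Mathlib

section
/- Let g_r1, g_r2, P1, P2 be positive reals and define J2(γ2) = C(g_r2²·(P2−γ2)/(g_r2²·γ2 + 1)) + C(g_12²·γ2) for γ2 ∈ [0, P2], where g_12 > g_r2 > 0. Then J2 is strictly increasing in γ2, so its maximum over [0, P2] is J2(P2) = C(g_12²·P2). -/
noncomputable def C (x : ℝ) : ℝ := Real.log (1 + x)

theorem stmt_7 (g_r2 g_12 P2 : ℝ)
    (h1 : 0 < g_r2) (h2 : g_r2 < g_12) (hP2 : 0 < P2)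
    (J2 : ℝ → ℝ)
    (hJ2 : ∀ γ2, J2 γ2 =
      C (g_r2^2 * (P2 - γ2) / (g_r2^2 * γ2 + 1)) + C (g_12^2 * γ2)) :
    StrictMonoOn J2 (Set.Icc 0 P2) ∧
    (∀ γ2 ∈ Set.Icc (0:ℝ) P2, J2 γ2 ≤ J2 P2) ∧
    J2 P2 = C (g_12^2 * P2) := by
  set a := g_r2^2 with ha
  set b := g_12^2 with hb
  have hapos : 0 < a := by positivity
  have hbpos : 0 < b := lt_trans h1 h2 |>.trans_le (le_refl _) |> fun _ => by positivity
  have hab : a < b := by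
    apply pow_lt_pow_left₀ h2 h1.le
    norm_num
  -- rewrite J2 on the interval
  have key : ∀ γ ∈ Set.Icc (0:ℝ) P2,
      J2 γ = Real.log (a * P2 + 1) + (Real.log (1 + b * γ) - Real.log (1 + a * γ)) := by
    intro γ hγ
    obtain ⟨hγ0, hγP⟩ := hγ
    have hden : (0:ℝ) < a * γ + 1 := by positivity
    have h1' : 1 + a * (P2 - γ) / (a * γ + 1) = (a * P2 + 1) / (a * γ + 1) := by
      field_simp
      ring
    rw [hJ2, C, C, h1', Real.log_div (by positivity) hden.ne']
    have : (1 : ℝ) + a * γ = a * γ + 1 := by ring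
    rw [this]
    ring
  have mono : StrictMonoOn J2 (Set.Icc 0 P2) := by
    intro x hx y hy hxy
    rw [key x hx, key y hy]
    have hx0 := hx.1
    have hy0 := hy.1
    have h1x : (0:ℝ) < 1 + a * x := by positivity
    have h1y : (0:ℝ) < 1 + a * y := by positivity
    have hbx : (0:ℝ) < 1 + b * x := by positivity
    have hby : (0:ℝ) < 1 + b * y := by positivity
    have hlt : (1 + b * x) * (1 + a * y) < (1 + b * y) * (1 + a * x) := by
      nlinarith [mul_pos hapos (sub_pos.mpr hxy)]
    have := Real.log_lt_log (by positivity) hlt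
    rw [Real.log_mul hbx.ne' h1y.ne', Real.log_mul hby.ne' h1x.ne'] at this
    linarith
  refine ⟨mono, ?_, ?_⟩
  · intro γ hγ
    rcases eq_or_lt_of_le hγ.2 with h | h
    · rw [h]
    · exact (mono hγ (Set.right_mem_Icc.mpr hP2.le) h).le
  · rw [hJ2, sub_self, mul_zero, zero_div, C, C]
    simp
end

section
/- Let g_r1, g_r2, g_21, g_12, P1, P2 be positive reals with g_r1 ≤ g_21 and g_r2 ≤ g_12, and let J3(γ1,γ2) be as in the independent pDF sum-rate constraint. Then J3 is maximized over [0,P1]×[0,P2] at γ1 = P1, γ2 = P2, with value C(g_21²·P1) + C(g_12²·P2). -/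
theorem stmt_9 (g_r1 g_r2 g_21 g_12 P1 P2 : ℝ)
    (h1 : 0 < g_r1) (h2 : 0 < g_r2) (h3 : 0 < g_21) (h4 : 0 < g_12)
    (hP1 : 0 < P1) (hP2 : 0 < P2) (hgg1 : g_r1 ≤ g_21) (hgg2 : g_r2 ≤ g_12)
    (J3 : ℝ → ℝ → ℝ)
    (hJ3 : ∀ γ1 γ2, J3 γ1 γ2 =
      C ((g_r1^2 * (P1 - γ1) + g_r2^2 * (P2 - γ2)) / (g_r1^2 * γ1 + g_r2^2 * γ2 + 1))
      + C (g_21^2 * γ1) + C (g_12^2 * γ2)) :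
    (∀ γ1 ∈ Set.Icc (0:ℝ) P1, ∀ γ2 ∈ Set.Icc (0:ℝ) P2, J3 γ1 γ2 ≤ J3 P1 P2) ∧
    J3 P1 P2 = C (g_21^2 * P1) + C (g_12^2 * P2) := by
  have ha : (0:ℝ) < g_r1^2 := by positivity
  have hb : (0:ℝ) < g_r2^2 := by positivity
  have hc : (0:ℝ) < g_21^2 := by positivity
  have hd : (0:ℝ) < g_12^2 := by positivity
  have hac : g_r1^2 ≤ g_21^2 := by nlinarith
  have hbd : g_r2^2 ≤ g_12^2 := by nlinarith
  have hend : J3 P1 P2 = C (g_21^2 * P1) + C (g_12^2 * P2) := by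
    rw [hJ3]
    have : (g_r1^2 * (P1 - P1) + g_r2^2 * (P2 - P2)) / (g_r1^2 * P1 + g_r2^2 * P2 + 1) = 0 := by
      simp
    rw [this]
    simp [C]
  refine ⟨?_, hend⟩
  intro γ1 hγ1 γ2 hγ2
  obtain ⟨h10, h1P⟩ := hγ1
  obtain ⟨h20, h2P⟩ := hγ2
  rw [hJ3, hend]
  set a := g_r1^2
  set b := g_r2^2
  set c := g_21^2
  set d := g_12^2
  set A := a * (P1 - γ1) + b * (P2 - γ2) with hA
  set B := a * γ1 + b * γ2 + 1 with hB
  have hApos : 0 ≤ A := by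
    have := mul_nonneg ha.le (sub_nonneg.2 h1P)
    have := mul_nonneg hb.le (sub_nonneg.2 h2P)
    positivity
  have hBpos : 0 < B := by positivity
  have hAB : A + B = a * P1 + b * P2 + 1 := by ring
  have hABpos : 0 < A + B := by linarith
  have h1c : (0:ℝ) < 1 + c * γ1 := by positivity
  have h2d : (0:ℝ) < 1 + d * γ2 := by positivity
  have h1cP : (0:ℝ) < 1 + c * P1 := by positivity
  have h2dP : (0:ℝ) < 1 + d * P2 := by positivity
  -- key polynomial inequality, in two one-variable steps
  have step1 : (a*P1+b*P2+1)*(1+c*γ1) ≤ (a*γ1+b*P2+1)*(1+c*P1) := by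
    nlinarith [mul_nonneg (sub_nonneg.2 h1P) (mul_nonneg (mul_nonneg hc.le hb.le) hP2.le),
      mul_nonneg (sub_nonneg.2 h1P) (sub_nonneg.2 hac)]
  have step2 : (a*γ1+b*P2+1)*(1+d*γ2) ≤ (a*γ1+b*γ2+1)*(1+d*P2) := by
    nlinarith [mul_nonneg (sub_nonneg.2 h2P) (mul_nonneg (mul_nonneg hd.le ha.le) h10),
      mul_nonneg (sub_nonneg.2 h2P) (sub_nonneg.2 hbd)]
  have key : (A + B) * ((1 + c * γ1) * (1 + d * γ2)) ≤ B * ((1 + c * P1) * (1 + d * P2)) := by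
    rw [hAB, hB]
    calc (a*P1+b*P2+1) * ((1+c*γ1)*(1+d*γ2))
        = (a*P1+b*P2+1)*(1+c*γ1)*(1+d*γ2) := by ring
      _ ≤ (a*γ1+b*P2+1)*(1+c*P1)*(1+d*γ2) := mul_le_mul_of_nonneg_right step1 h2d.le
      _ = (a*γ1+b*P2+1)*(1+d*γ2)*(1+c*P1) := by ring
      _ ≤ (a*γ1+b*γ2+1)*(1+d*P2)*(1+c*P1) := mul_le_mul_of_nonneg_right step2 h1cP.le
      _ = (a*γ1+b*γ2+1)*((1+c*P1)*(1+d*P2)) := by ring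
  have hCdiv : C (A / B) = Real.log (A + B) - Real.log B := by
    unfold C
    rw [show (1 : ℝ) + A / B = (A + B) / B by field_simp; ring, Real.log_div (by linarith) hBpos.ne']
  rw [hCdiv]
  unfold C
  have hsum : Real.log (A + B) + Real.log (1 + c * γ1) + Real.log (1 + d * γ2)
      = Real.log ((A + B) * ((1 + c * γ1) * (1 + d * γ2))) := by
    rw [Real.log_mul hABpos.ne' (by positivity), Real.log_mul h1c.ne' h2d.ne']
    ring
  have hsum2 : Real.log B + Real.log (1 + c * P1) + Real.log (1 + d * P2)
      = Real.log (B * ((1 + c * P1) * (1 + d * P2))) := by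
    rw [Real.log_mul hBpos.ne' (by positivity), Real.log_mul h1cP.ne' h2dP.ne']
    ring
  have hle : Real.log ((A + B) * ((1 + c * γ1) * (1 + d * γ2)))
      ≤ Real.log (B * ((1 + c * P1) * (1 + d * P2))) :=
    Real.log_le_log (by positivity) key
  linarith [hsum, hsum2, hle]
end

section
/- Let g_r1, g_r2, g_21, g_2r, g_12, P1, P2, Pr be positive reals with g_21² + g_2r²·(Pr/P1) < g_r1² < g_21²·(1 + g_r2²·P2) and g_r2 < g_12. Set γ2max = (1/g_r2²)·(g_r1²/(g_21² + g_2r²·(Pr/P1)) − 1). Then C(g_r1²·P1/(1 + g_r2²·P2)) < C(g_21²·P1 + g_2r²·Pr), and the point E with R1(E) = C(g_21²·P1 + g_2r²·Pr), R2(E) = C((g_r1²·P1 + g_r2²·(P2−γ2max))/(1 + g_r2²·γ2max)) + C(g_12²·γ2max) − C(g_21²·P1 + g_2r²·Pr) satisfies R2(E) > C(g_r1²·P1 + g_r2²·P2) − C(g_21²·P1 + g_2r²·Pr), i.e., R2(E) strictly exceeds the second coordinate of the full-DF corner point B at the same R1. -/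
theorem stmt_14 (g_r1 g_r2 g_21 g_2r g_12 P1 P2 Pr : ℝ)
    (h1 : 0 < g_r1) (h2 : 0 < g_r2) (h3 : 0 < g_21) (h4 : 0 < g_2r) (h5 : 0 < g_12)
    (hP1 : 0 < P1) (hP2 : 0 < P2) (hPr : 0 < Pr)
    (hc1 : g_21^2 + g_2r^2 * (Pr / P1) < g_r1^2)
    (hc2 : g_r1^2 < g_21^2 * (1 + g_r2^2 * P2))
    (hc3 : g_r2 < g_12) :
    let γ2max := (1 / g_r2^2) * (g_r1^2 / (g_21^2 + g_2r^2 * (Pr / P1)) - 1)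
    C (g_r1^2 * P1 / (1 + g_r2^2 * P2)) < C (g_21^2 * P1 + g_2r^2 * Pr) ∧
    C ((g_r1^2 * P1 + g_r2^2 * (P2 - γ2max)) / (1 + g_r2^2 * γ2max))
      + C (g_12^2 * γ2max) - C (g_21^2 * P1 + g_2r^2 * Pr)
      > C (g_r1^2 * P1 + g_r2^2 * P2) - C (g_21^2 * P1 + g_2r^2 * Pr) := by
  intro γ2max
  have hD : 0 < g_21^2 + g_2r^2 * (Pr / P1) := by positivity
  have hγ : 0 < γ2max := by
    have : 1 < g_r1^2 / (g_21^2 + g_2r^2 * (Pr / P1)) :=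
      (one_lt_div hD).mpr hc1
    have := sub_pos.mpr this
    positivity
  constructor
  · -- first part
    unfold C
    apply Real.log_lt_log
    · have : 0 < 1 + g_r2^2 * P2 := by positivity
      positivity
    have hden : 0 < 1 + g_r2^2 * P2 := by positivity
    have h : g_r1^2 * P1 / (1 + g_r2^2 * P2) < g_21^2 * P1 := by
      rw [div_lt_iff₀ hden]
      calc g_r1^2 * P1 < g_21^2 * (1 + g_r2^2 * P2) * P1 := by nlinarith
        _ = g_21^2 * P1 * (1 + g_r2^2 * P2) := by ring
    have : g_21^2 * P1 < g_21^2 * P1 + g_2r^2 * Pr := lt_add_of_pos_right _ (by positivity)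
    linarith
  · -- second part
    set A := g_r1^2 * P1 + g_r2^2 * P2 with hA
    have hApos : 0 < A := by positivity
    have hs : 0 < 1 + g_r2^2 * γ2max := by positivity
    have key : (1 : ℝ) + (g_r1^2 * P1 + g_r2^2 * (P2 - γ2max)) / (1 + g_r2^2 * γ2max)
        = (1 + A) / (1 + g_r2^2 * γ2max) := by
      field_simp
      ring
    have hCsplit : C ((g_r1^2 * P1 + g_r2^2 * (P2 - γ2max)) / (1 + g_r2^2 * γ2max))
        = Real.log (1 + A) - Real.log (1 + g_r2^2 * γ2max) := by
      unfold C
      rw [key, Real.log_div (by positivity) (by positivity)]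
    have hlt : Real.log (1 + g_r2^2 * γ2max) < Real.log (1 + g_12^2 * γ2max) := by
      apply Real.log_lt_log hs
      have : g_r2^2 < g_12^2 := by nlinarith
      nlinarith
    have : C A < Real.log (1 + A) - Real.log (1 + g_r2^2 * γ2max) + C (g_12^2 * γ2max) := by
      unfold C
      linarith
    rw [hCsplit]
    unfold C at this ⊢
    linarith
end
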